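/- arXiv:math/0405178 — 2 statements merged into one kernel-verified Lean document; each statement's English description precedes it below -/
import Mathlib

section
/- Let r ≠ 0. Two elements t^r · ι(u) and t^s · ι(v) of G (with s ∈ ℤ and u, v ∈ F) are conjugate in G if and only if r = s and there exists an integer k with 0 ≤ k ≤ |r| − 1 such that φ^k(u) is φ^r-twisted conjugate to v. -/
/-!
Every element of `G` has a normal form `t ^ m * ι g`, which is unique because `ι` is injective
and no nonzero power of `t` lies in the image of `ι`. Conjugating `t ^ r * ι u` by `t ^ n * ι g`
gives `t ^ r * ι ((φ ^ r g)⁻¹ * φ ^ n u * g)`, so conjugacy forces `r = s` and says that `v` is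
`φ ^ r`-twisted conjugate to some `φ ^ n u`. As `w` and `φ ^ r w` are always `φ ^ r`-twisted
conjugate, only the residue of `n` modulo `r` matters.
-/

def TwistedConj {F : Type*} [Group F] (φ : MulAut F) (u v : F) : Prop :=
  ∃ g : F, v = (φ g)⁻¹ * u * g

namespace TwistedConj

variable {F : Type*} [Group F] {φ : MulAut F} {u v w : F}

theorem refl (φ : MulAut F) (u : F) : TwistedConj φ u u :=
  ⟨1, by simp⟩

theorem symm (h : TwistedConj φ u v) : TwistedConj φ v u := by
  obtain ⟨g, rfl⟩ := h
  exact ⟨g⁻¹, by simp [mul_assoc]⟩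

theorem trans (h₁ : TwistedConj φ u v) (h₂ : TwistedConj φ v w) : TwistedConj φ u w := by
  obtain ⟨g, rfl⟩ := h₁
  obtain ⟨h, rfl⟩ := h₂
  exact ⟨g * h, by simp [mul_assoc]⟩

theorem apply_self (φ : MulAut F) (u : F) : TwistedConj φ u (φ u) :=
  ⟨u⁻¹, by simp⟩

theorem zpow_apply_self (φ : MulAut F) (q : ℤ) (u : F) : TwistedConj φ u ((φ ^ q) u) := by
  induction q using Int.induction_on with
  | zero => exact refl φ u
  | succ n ih =>
    rw [add_comm, zpow_add, zpow_one, MulAut.mul_apply]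
    exact ih.trans (apply_self φ _)
  | pred n ih =>
    have h := apply_self φ ((φ ^ (-n - 1 : ℤ)) u)
    rw [← MulAut.mul_apply, ← zpow_one_add, add_sub_cancel] at h
    exact ih.trans h.symm

end TwistedConj

theorem exists_twistedConj_zpow_apply_iff {F : Type*} [Group F] (φ : MulAut F) {r : ℤ}
    (hr : r ≠ 0) (u v : F) :
    (∃ n : ℤ, TwistedConj (φ ^ r) ((φ ^ n) u) v) ↔
      ∃ k : ℤ, 0 ≤ k ∧ k ≤ |r| - 1 ∧ TwistedConj (φ ^ r) ((φ ^ k) u) v := by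
  refine ⟨fun ⟨n, hn⟩ => ⟨n % r, Int.emod_nonneg n hr, ?_, ?_⟩, fun ⟨k, _, _, hk⟩ => ⟨k, hk⟩⟩
  · linarith [Int.emod_lt_abs n hr]
  · have hshift : (φ ^ n) u = ((φ ^ r) ^ (n / r)) ((φ ^ (n % r)) u) := by
      rw [← MulAut.mul_apply, ← zpow_mul, ← zpow_add, Int.mul_ediv_add_emod]
    rw [hshift] at hn
    exact (TwistedConj.zpow_apply_self _ _ _).trans hn

section MappingTorus

variable {F G : Type*} [Group F] [Group G] {φ : MulAut F} {ι : F →* G} {t : G}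

theorem zpow_inv_mul_mul_zpow (ht : ∀ w, t⁻¹ * ι w * t = ι (φ w)) (m : ℤ) (w : F) :
    (t ^ m)⁻¹ * ι w * t ^ m = ι ((φ ^ m) w) := by
  have ht_inv (x : F) : t * ι x * t⁻¹ = ι (φ⁻¹ x) := by
    have h := ht (φ⁻¹ x)
    rw [MulAut.apply_inv_self] at h
    rw [← h]
    group
  induction m using Int.induction_on generalizing w with
  | zero => simp
  | succ n ih =>
    calc (t ^ (n + 1 : ℤ))⁻¹ * ι w * t ^ (n + 1 : ℤ)
        = t⁻¹ * ((t ^ (n : ℤ))⁻¹ * ι w * t ^ (n : ℤ)) * t := by rw [zpow_add_one]; group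
      _ = ι ((φ ^ (n + 1 : ℤ)) w) := by rw [ih, ht, add_comm, zpow_add, zpow_one, MulAut.mul_apply]
  | pred n ih =>
    calc (t ^ (-n - 1 : ℤ))⁻¹ * ι w * t ^ (-n - 1 : ℤ)
        = t * ((t ^ (-n : ℤ))⁻¹ * ι w * t ^ (-n : ℤ)) * t⁻¹ := by rw [zpow_sub_one]; group
      _ = ι ((φ ^ (-n - 1 : ℤ)) w) := by
        rw [ih, ht_inv, sub_eq_neg_add, zpow_add, zpow_neg_one, MulAut.mul_apply]

theorem mul_zpow_eq_zpow_mul (ht : ∀ w, t⁻¹ * ι w * t = ι (φ w)) (m : ℤ) (w : F) :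
    ι w * t ^ m = t ^ m * ι ((φ ^ m) w) := by
  rw [← zpow_inv_mul_mul_zpow ht]; group

theorem exists_eq_zpow_mul (ht : ∀ w, t⁻¹ * ι w * t = ι (φ w))
    (hgen : Subgroup.closure (Set.range ι ∪ {t}) = ⊤) (c : G) :
    ∃ (m : ℤ) (g : F), c = t ^ m * ι g := by
  have hc : c ∈ Subgroup.closure (Set.range ι ∪ {t}) := hgen ▸ Subgroup.mem_top c
  induction hc using Subgroup.closure_induction with
  | mem x hx =>
    rcases hx with ⟨w, rfl⟩ | rfl
    · exact ⟨0, w, by simp⟩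
    · exact ⟨1, 1, by simp⟩
  | one => exact ⟨0, 1, by simp⟩
  | mul x y _ _ hx hy =>
    obtain ⟨m, g, rfl⟩ := hx
    obtain ⟨n, h, rfl⟩ := hy
    refine ⟨m + n, (φ ^ n) g * h, ?_⟩
    rw [map_mul, zpow_add, ← mul_assoc, mul_assoc (t ^ m), mul_zpow_eq_zpow_mul ht]
    group
  | inv x _ hx =>
    obtain ⟨m, g, rfl⟩ := hx
    refine ⟨-m, (φ ^ (-m)) g⁻¹, ?_⟩
    rw [← mul_zpow_eq_zpow_mul ht, map_inv]
    group

theorem zpow_mul_eq_zpow_mul_iff (hι : Function.Injective ι)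
    (htor : ∀ k : ℤ, t ^ k ∈ Set.range ι → k = 0) {a b : ℤ} {x y : F} :
    t ^ a * ι x = t ^ b * ι y ↔ a = b ∧ x = y := by
  refine ⟨fun h => ?_, by rintro ⟨rfl, rfl⟩; rfl⟩
  have hpow : t ^ (a - b) = ι (y * x⁻¹) :=
    calc t ^ (a - b) = (t ^ b)⁻¹ * (t ^ a * ι x) * (ι x)⁻¹ := by group
      _ = ι (y * x⁻¹) := by rw [h, map_mul, map_inv]; group
  obtain rfl : a = b := by linarith [htor _ ⟨_, hpow.symm⟩]
  exact ⟨rfl, hι (mul_left_cancel h)⟩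

theorem conj_zpow_mul (ht : ∀ w, t⁻¹ * ι w * t = ι (φ w)) (n r : ℤ) (g u : F) :
    (t ^ n * ι g)⁻¹ * (t ^ r * ι u) * (t ^ n * ι g) =
      t ^ r * ι (((φ ^ r) g)⁻¹ * (φ ^ n) u * g) := by
  calc (t ^ n * ι g)⁻¹ * (t ^ r * ι u) * (t ^ n * ι g)
      = (ι g⁻¹ * t ^ r) * ((t ^ n)⁻¹ * ι u * t ^ n) * ι g := by rw [map_inv]; group
    _ = t ^ r * ι (((φ ^ r) g)⁻¹ * (φ ^ n) u * g) := by
      rw [mul_zpow_eq_zpow_mul ht, zpow_inv_mul_mul_zpow ht, map_inv, map_mul, map_mul]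
      group

theorem isConj_zpow_mul_iff (hι : Function.Injective ι) (ht : ∀ w, t⁻¹ * ι w * t = ι (φ w))
    (hgen : Subgroup.closure (Set.range ι ∪ {t}) = ⊤)
    (htor : ∀ k : ℤ, t ^ k ∈ Set.range ι → k = 0) (r s : ℤ) (u v : F) :
    IsConj (t ^ r * ι u) (t ^ s * ι v) ↔
      r = s ∧ ∃ n : ℤ, TwistedConj (φ ^ r) ((φ ^ n) u) v := by
  rw [isConj_iff]
  constructor
  · rintro ⟨c, hc⟩
    obtain ⟨n, g, hng⟩ := exists_eq_zpow_mul ht hgen c⁻¹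
    rw [← inv_inv c, hng, inv_inv, conj_zpow_mul ht] at hc
    obtain ⟨rfl, rfl⟩ := (zpow_mul_eq_zpow_mul_iff hι htor).mp hc
    exact ⟨rfl, n, g, rfl⟩
  · rintro ⟨rfl, n, g, rfl⟩
    exact ⟨(t ^ n * ι g)⁻¹, by rw [inv_inv, conj_zpow_mul ht]⟩

end MappingTorus

/-- For `r ≠ 0`, the elements `t^r * ι u` and `t^s * ι v` of the [f.g. free]-by-(infinite
cyclic) group `G` are conjugate iff `r = s` and `φ^k u` is `φ^r`-twisted conjugate to `v`
for some integer `0 ≤ k ≤ |r| - 1`. -/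
theorem isConj_iff_twistedConj_bounded {α : Type*} {G : Type*} [Group G]
    (φ : MulAut (FreeGroup α)) (ι : FreeGroup α →* G) (hι : Function.Injective ι)
    (t : G) (ht : ∀ w : FreeGroup α, t⁻¹ * ι w * t = ι (φ w))
    (hgen : Subgroup.closure (Set.range ι ∪ {t}) = ⊤)
    (htor : ∀ k : ℤ, t ^ k ∈ Set.range ι → k = 0)
    (r s : ℤ) (hr : r ≠ 0) (u v : FreeGroup α) :
    IsConj (t ^ r * ι u) (t ^ s * ι v) ↔
      r = s ∧ ∃ k : ℤ, 0 ≤ k ∧ k ≤ |r| - 1 ∧ TwistedConj (φ ^ r) ((φ ^ k) u) v := by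
  rw [isConj_zpow_mul_iff hι ht hgen htor, exists_twistedConj_zpow_apply_iff φ hr]
end

section
/- For every p ≥ 1, every g ∈ F and every v ∈ F: v_{φ,p} = (φ^p g)⁻¹ · u_{φ,p} · g holds in F if and only if ι(g)⁻¹ · z · ι(g) ∈ Fix((γ_{ι v} ∘ ψ)^p). -/
/-- `twistedPow φ w p = φ^(p-1) w * φ^(p-2) w * ⋯ * φ w * w`. -/
def twistedPow {F : Type*} [Group F] (φ : MulAut F) (w : F) : ℕ → F
  | 0 => 1
  | p + 1 => (φ ^ p) w * twistedPow φ w p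

section Aux

open FreeGroup SemidirectProduct

private def jmap {α : Type*} : FreeGroup α →* FreeGroup (α × ℤ) :=
  FreeGroup.map (fun a => (a, (0:ℤ)))

private noncomputable def shAut (α : Type*) : MulAut (FreeGroup (α × ℤ)) :=
  FreeGroup.freeGroupCongr ((Equiv.refl α).prodCongr (Equiv.addRight (1:ℤ)))

private noncomputable def phiZ (α : Type*) : Multiplicative ℤ →* MulAut (FreeGroup (α × ℤ)) :=
  zpowersHom _ (shAut α)

private noncomputable def bigPhi (α : Type*) :
    FreeGroup (Option α) →* FreeGroup (α × ℤ) ⋊[phiZ α] Multiplicative ℤ :=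
  FreeGroup.lift (fun o => o.elim (inr (Multiplicative.ofAdd 1))
    (fun a => inl (FreeGroup.of (a, (0:ℤ)))))

private lemma comm_none_eq_one {α : Type*} (x : FreeGroup α)
    (h : FreeGroup.map Option.some x * FreeGroup.of none
       = FreeGroup.of none * FreeGroup.map Option.some x) : x = 1 := by
  classical
  have hΦι : ∀ y : FreeGroup α, bigPhi α (FreeGroup.map Option.some y) = inl (jmap y) := by
    intro y
    have : (bigPhi α).comp (FreeGroup.map Option.some)
        = (inl : _ →* _).comp (jmap (α := α)) := by
      apply FreeGroup.ext_hom
      intro a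
      simp [bigPhi, jmap]
    exact DFunLike.congr_fun this y
  have hΦz : bigPhi α (FreeGroup.of none) = inr (Multiplicative.ofAdd 1) := by
    simp [bigPhi]
  have h2 := congrArg (bigPhi α) h
  rw [MonoidHom.map_mul, MonoidHom.map_mul, hΦι, hΦz] at h2
  have h3 : (inl (jmap x) : FreeGroup (α × ℤ) ⋊[phiZ α] Multiplicative ℤ)
      = inl ((phiZ α (Multiplicative.ofAdd 1)) (jmap x)) := by
    rw [inl_aut]
    rw [← h2, mul_assoc]
    simp
  have h4 : jmap x = shAut α (jmap x) := by
    have := inl_injective h3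
    simpa [phiZ] using this
  set ρ : FreeGroup (α × ℤ) →* FreeGroup α :=
    FreeGroup.lift (fun q => if q.2 = 0 then FreeGroup.of q.1 else 1) with hρ
  have hρj : ρ (jmap x) = x := by
    have : ρ.comp (jmap (α := α)) = MonoidHom.id _ := by
      apply FreeGroup.ext_hom; intro a; simp [hρ, jmap]
    exact DFunLike.congr_fun this x
  have hρsh : ρ (shAut α (jmap x)) = 1 := by
    have : ρ.comp ((shAut α).toMonoidHom.comp (jmap (α := α))) = 1 := by
      apply FreeGroup.ext_hom; intro a
      simp [hρ, jmap, shAut]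
    exact DFunLike.congr_fun this x
  rw [← hρj, h4, hρsh]

end Aux

/-- With `ι`, `z`, `ψ` as in the twisted conjugacy construction: for `p ≥ 1`,
`v_{φ,p} = (φ^p g)⁻¹ * u_{φ,p} * g` holds in `F` iff `(ι g)⁻¹ * z * ι g` is fixed by
`(γ_{ι v} ∘ ψ)^p`. -/
theorem twistedPow_conj_iff_fixed_pow {α : Type*}
    (φ : MulAut (FreeGroup α)) (u : FreeGroup α)
    (ι : FreeGroup α →* FreeGroup (Option α)) (hι : ι = FreeGroup.map Option.some)
    (z : FreeGroup (Option α)) (hz : z = FreeGroup.of none)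
    (ψ : MulAut (FreeGroup (Option α)))
    (hψ : ∀ w : FreeGroup α, ψ (ι w) = ι (φ w))
    (hψz : ψ z = ι u * z * (ι u)⁻¹)
    (p : ℕ) (hp : 1 ≤ p) (g v : FreeGroup α) :
    twistedPow φ v p = ((φ ^ p) g)⁻¹ * twistedPow φ u p * g ↔
      ((MulAut.conj (ι v)⁻¹ * ψ) ^ p) ((ι g)⁻¹ * z * ι g) = (ι g)⁻¹ * z * ι g := by
  set θ : MulAut (FreeGroup (Option α)) := MulAut.conj (ι v)⁻¹ * ψ with hθ
  have hθap : ∀ x, θ x = (ι v)⁻¹ * ψ x * ι v := by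
    intro x
    simp [hθ, MulAut.mul_apply, MulAut.conj_apply]
  have hw : ∀ (q : ℕ) (w : FreeGroup α),
      (θ ^ q) (ι w) = (ι (twistedPow φ v q))⁻¹ * ι ((φ ^ q) w) * ι (twistedPow φ v q) := by
    intro q
    induction q with
    | zero => intro w; simp [twistedPow]
    | succ q ihq =>
      intro w
      rw [pow_succ, MulAut.mul_apply, hθap, hψ, ← map_inv, ← map_mul, ← map_mul, ihq]
      simp only [twistedPow, map_mul, map_inv, pow_succ, MulAut.mul_apply]
      group
  have hzp : ∀ q : ℕ, (θ ^ q) z =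
      (ι (twistedPow φ v q))⁻¹ * ι (twistedPow φ u q) * z *
        (ι (twistedPow φ u q))⁻¹ * ι (twistedPow φ v q) := by
    intro q
    induction q with
    | zero => simp [twistedPow]
    | succ q ihq =>
      rw [pow_succ, MulAut.mul_apply, hθap, hψz]
      simp only [map_mul, map_inv, ihq, hw q u, hw q v]
      simp only [twistedPow, map_mul, map_inv]
      group
  have key : (θ ^ p) ((ι g)⁻¹ * z * ι g)
      = ι ((twistedPow φ v p)⁻¹ * ((φ ^ p) g)⁻¹ * twistedPow φ u p) * z *
        ι ((twistedPow φ u p)⁻¹ * (φ ^ p) g * twistedPow φ v p) := by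
    simp only [map_mul, map_inv, hzp p, hw p g]
    group
  rw [key]
  constructor
  · intro hEq
    rw [hEq]
    simp only [map_mul, map_inv]
    group
  · intro hEq
    have h5 : ι (g * (twistedPow φ v p)⁻¹ * ((φ ^ p) g)⁻¹ * twistedPow φ u p) * z
        * (ι (g * (twistedPow φ v p)⁻¹ * ((φ ^ p) g)⁻¹ * twistedPow φ u p))⁻¹ = z := by
      calc ι (g * (twistedPow φ v p)⁻¹ * ((φ ^ p) g)⁻¹ * twistedPow φ u p) * z
            * (ι (g * (twistedPow φ v p)⁻¹ * ((φ ^ p) g)⁻¹ * twistedPow φ u p))⁻¹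
          = ι g * (ι ((twistedPow φ v p)⁻¹ * ((φ ^ p) g)⁻¹ * twistedPow φ u p) * z *
              ι ((twistedPow φ u p)⁻¹ * (φ ^ p) g * twistedPow φ v p)) * (ι g)⁻¹ := by
            simp only [map_mul, map_inv]; group
        _ = ι g * ((ι g)⁻¹ * z * ι g) * (ι g)⁻¹ := by rw [hEq]
        _ = z := by group
    have hc : ι (g * (twistedPow φ v p)⁻¹ * ((φ ^ p) g)⁻¹ * twistedPow φ u p) * z
        = z * ι (g * (twistedPow φ v p)⁻¹ * ((φ ^ p) g)⁻¹ * twistedPow φ u p) := by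
      rw [← mul_inv_eq_iff_eq_mul]; exact h5
    have h7 : g * (twistedPow φ v p)⁻¹ * ((φ ^ p) g)⁻¹ * twistedPow φ u p = 1 := by
      apply comm_none_eq_one
      rw [← hι, ← hz]
      exact hc
    calc twistedPow φ v p
        = ((φ ^ p) g)⁻¹ * twistedPow φ u p *
            (g * (twistedPow φ v p)⁻¹ * ((φ ^ p) g)⁻¹ * twistedPow φ u p)⁻¹ * g := by group
      _ = ((φ ^ p) g)⁻¹ * twistedPow φ u p * g := by rw [h7]; group
end
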